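/- Let ε be a real number with ε ≥ 4√2 − 1, and let Z be a nonnegative real-valued random variable with finite second moment satisfying σ²[Z] ≤ E[Z]. If E[Z] ≥ 8·pivot(ε), then P(Z < thresh(ε)) ≤ 1/45.28. -/

import Mathlib

open MeasureTheory ProbabilityTheory

/-- `pivot ε = 9.84·(1 + 1/ε)²`. -/
noncomputable def pivot (ε : ℝ) : ℝ := 9.84 * (1 + 1 / ε) ^ 2

/-- `thresh ε = 9.84·(1 + ε/(1+ε))·(1 + 1/ε)²`. -/
noncomputable def thresh (ε : ℝ) : ℝ := 9.84 * (1 + ε / (1 + ε)) * (1 + 1 / ε) ^ 2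

/-!
Cantelli's one-sided inequality `P(X ≤ E X - l) ≤ Var X / (Var X + l²)` is Markov's inequality
applied to `(E X + Var X / l - X)²`. Since `ε > 0`, `thresh ε ≤ 2 pivot ε` and `pivot ε ≥ 9.84`, so
`E Z ≥ 78.72` and `thresh ε ≤ E Z / 4`; taking `l = E Z - thresh ε ≥ 3 E Z / 4` and `Var Z ≤ E Z`
gives the bound `1 / (1 + (9/16) · 78.72) = 1 / 45.28`.
-/

section Cantelli

variable {Ω : Type*} [MeasurableSpace Ω] {μ : Measure Ω} [IsProbabilityMeasure μ] {X : Ω → ℝ}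

lemma integral_sq_eq_variance_add_sq (hX : MemLp X 2 μ) :
    ∫ ω, X ω ^ 2 ∂μ = Var[X; μ] + (∫ ω, X ω ∂μ) ^ 2 := by
  rw [variance_eq_sub hX]
  simp only [Pi.pow_apply]
  ring

/-- Markov's inequality for `(μ[X] + u - X)²`; optimizing over `u` gives Cantelli's inequality. -/
lemma meas_le_integral_sub_le_variance_add_sq_div (hX : MemLp X 2 μ) {l u : ℝ}
    (hlu : 0 < l + u) :
    μ.real {ω | X ω ≤ μ[X] - l} ≤ (Var[X; μ] + u ^ 2) / (l + u) ^ 2 := by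
  set Y := fun ω ↦ μ[X] + u - X ω
  have hY : MemLp Y 2 μ := (memLp_const _).sub hX
  have hY_mean : μ[Y] = u := by
    simp only [Y]
    rw [integral_sub (integrable_const _) (hX.integrable one_le_two), integral_const]
    simp
  have hY_var : Var[Y; μ] = Var[X; μ] := variance_const_sub hX.aestronglyMeasurable _
  have hY_sq : ∫ ω, Y ω ^ 2 ∂μ = Var[X; μ] + u ^ 2 := by
    rw [integral_sq_eq_variance_add_sq hY, hY_mean, hY_var]
  have h_sub : {ω | X ω ≤ μ[X] - l} ⊆ {ω | (l + u) ^ 2 ≤ Y ω ^ 2} := fun ω hω ↦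
    pow_le_pow_left₀ hlu.le (by simp only [Set.mem_ofPred_eq, Y] at hω ⊢; linarith) 2
  have h_markov := mul_meas_ge_le_integral_of_nonneg (ae_of_all μ fun ω ↦ sq_nonneg (Y ω))
    hY.integrable_sq ((l + u) ^ 2)
  rw [le_div_iff₀ (by positivity), mul_comm, ← hY_sq]
  exact (mul_le_mul_of_nonneg_left (measureReal_mono h_sub) (by positivity)).trans h_markov

lemma cantelli (hX : MemLp X 2 μ) {l : ℝ} (hl : 0 < l) :
    μ.real {ω | X ω ≤ μ[X] - l} ≤ Var[X; μ] / (Var[X; μ] + l ^ 2) := by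
  have hV := variance_nonneg X μ
  convert meas_le_integral_sub_le_variance_add_sq_div hX
    (add_pos_of_pos_of_nonneg hl (div_nonneg hV hl.le)) using 1
  field_simp
  ring

end Cantelli

lemma le_pivot {ε : ℝ} (hε : 0 < ε) : 9.84 ≤ pivot ε := by
  have : 1 ≤ (1 + 1 / ε) ^ 2 := one_le_pow₀ (by simp [hε.le])
  unfold pivot
  linarith

lemma thresh_le_two_mul_pivot {ε : ℝ} (hε : 0 < ε) : thresh ε ≤ 2 * pivot ε := by
  have : ε / (1 + ε) ≤ 1 := (div_le_one (by linarith)).2 (by linarith)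
  unfold thresh pivot
  have := sq_nonneg (1 + 1 / ε)
  nlinarith

theorem stmt_19_general {Ω : Type*} [MeasurableSpace Ω] (μ : Measure Ω) [IsProbabilityMeasure μ]
    (ε : ℝ) (hlo : 4 * Real.sqrt 2 - 1 ≤ ε)
    (Z : Ω → ℝ) (hL2 : MemLp Z 2 μ)
    (hvar : variance Z μ ≤ ∫ x, Z x ∂μ)
    (hE : 8 * pivot ε ≤ ∫ x, Z x ∂μ) :
    (μ {ω | Z ω < thresh ε}).toReal ≤ 1 / 45.28 := by
  have hε : 0 < ε := by linarith [Real.one_lt_sqrt_two]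
  set m := ∫ x, Z x ∂μ
  have hm : 78.72 ≤ m := by linarith [le_pivot hε]
  have hl : 3 * m / 4 ≤ m - thresh ε := by linarith [thresh_le_two_mul_pivot hε]
  have hl_pos : 0 < m - thresh ε := by linarith
  calc μ.real {ω | Z ω < thresh ε}
      ≤ μ.real {ω | Z ω ≤ m - (m - thresh ε)} := measureReal_mono fun ω hω ↦ by
        simp only [Set.mem_ofPred_eq] at hω ⊢; linarith
    _ ≤ Var[Z; μ] / (Var[Z; μ] + (m - thresh ε) ^ 2) := cantelli hL2 hl_pos
    _ ≤ 1 / 45.28 := by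
      rw [div_le_div_iff₀ (add_pos_of_nonneg_of_pos (variance_nonneg Z μ) (pow_pos hl_pos 2))
        (by norm_num)]
      nlinarith [mul_le_mul hl hl (by linarith) (by linarith)]

theorem stmt_19 {Ω : Type*} [MeasurableSpace Ω] (μ : Measure Ω) [IsProbabilityMeasure μ]
    (ε : ℝ) (hlo : 4 * Real.sqrt 2 - 1 ≤ ε)
    (Z : Ω → ℝ) (hZnonneg : ∀ ω, 0 ≤ Z ω) (hL2 : MemLp Z 2 μ)
    (hvar : variance Z μ ≤ ∫ x, Z x ∂μ)
    (hE : 8 * pivot ε ≤ ∫ x, Z x ∂μ) :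
    (μ {ω | Z ω < thresh ε}).toReal ≤ 1 / 45.28 :=
  stmt_19_general μ ε hlo Z hL2 hvar hE
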